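/- arXiv:1108.4358 — 2 statements merged into one kernel-verified Lean document; each statement's English description precedes it below -/
import Mathlib

section
/- The Lagrangian subproblem Z_LD(λ) decomposes: Z_LD(λ) equals the optimal value of a maximum-weight bipartite matching problem between V_1 and V_2 where the weight of matching i to k is c_{ik} + v_{ik}(λ), and each v_{ik}(λ) is itself the optimal value of a maximum-weight bipartite matching problem between V_1∖{i} and V_2∖{k} with modified weights (w_{ikjl} + λ_{ikjl} if j > i, and w_{ikjl} − λ_{jlik} if j < i). -/
open Finset

/-- Feasibility for the Lagrangian subproblem: `x` is a binary partial matching and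
the binary variables `y` satisfy the lifted constraints. -/
def Feas (n1 n2 : ℕ) (x : Fin n1 → Fin n2 → ℝ)
    (y : Fin n1 → Fin n2 → Fin n1 → Fin n2 → ℝ) : Prop :=
  (∀ i k, x i k = 0 ∨ x i k = 1) ∧
  (∀ i k j l, y i k j l = 0 ∨ y i k j l = 1) ∧
  (∀ j, ∑ l, x j l ≤ 1) ∧
  (∀ l, ∑ j, x j l ≤ 1) ∧
  (∀ i j k, i ≠ j → ∑ l ∈ Finset.univ.erase k, y i k j l ≤ x i k) ∧
  (∀ i k l, k ≠ l → ∑ j ∈ Finset.univ.erase i, y i k j l ≤ x i k)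

/-- The Lagrangian objective (with split, symmetric interaction weights `w` and
multipliers `lam` dualizing the linking constraints `y i k j l = y j l i k`). -/
def lagObj (n1 n2 : ℕ) (c : Fin n1 → Fin n2 → ℝ)
    (w lam : Fin n1 → Fin n2 → Fin n1 → Fin n2 → ℝ)
    (x : Fin n1 → Fin n2 → ℝ)
    (y : Fin n1 → Fin n2 → Fin n1 → Fin n2 → ℝ) : ℝ :=
  (∑ i, ∑ k, c i k * x i k) +
  (∑ i, ∑ j, ∑ k, ∑ l,
    if i < j ∧ k ≠ l then (w i k j l + lam i k j l) * y i k j l else 0) +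
  (∑ i, ∑ j, ∑ k, ∑ l,
    if j < i ∧ k ≠ l then (w i k j l - lam j l i k) * y i k j l else 0)

/-- The Lagrangian dual value `Z_LD(λ)`. -/
noncomputable def ZLD (n1 n2 : ℕ) (c : Fin n1 → Fin n2 → ℝ)
    (w lam : Fin n1 → Fin n2 → Fin n1 → Fin n2 → ℝ) : ℝ :=
  sSup {v : ℝ | ∃ x y, Feas n1 n2 x y ∧ v = lagObj n1 n2 c w lam x y}

/-- An alignment: a partial injective function from `Fin n1` to `Fin n2`. -/
def PartialInj (n1 n2 : ℕ) (a : Fin n1 → Option (Fin n2)) : Prop :=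
  ∀ i j k, a i = some k → a j = some k → i = j

/-- The additive alignment score (with split, symmetric interaction weights `w`,
summed over both orders of each pair). -/
def alnScore (n1 n2 : ℕ) (c : Fin n1 → Fin n2 → ℝ)
    (w : Fin n1 → Fin n2 → Fin n1 → Fin n2 → ℝ)
    (a : Fin n1 → Option (Fin n2)) : ℝ :=
  (∑ i, (a i).elim 0 (fun k => c i k)) +
  (∑ i, ∑ j, if i ≠ j then
    (a i).elim 0 (fun k => (a j).elim 0 (fun l => w i k j l)) else 0)

/-- The local subproblem `v_{ik}(λ)`: a maximum-weight bipartite matching between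
`V1 ∖ {i}` and `V2 ∖ {k}` with weights `w i k j l + λ i k j l` for `j > i` and
`w i k j l - λ j l i k` for `j < i`. -/
noncomputable def vik (n1 n2 : ℕ)
    (w lam : Fin n1 → Fin n2 → Fin n1 → Fin n2 → ℝ)
    (i : Fin n1) (k : Fin n2) : ℝ :=
  sSup {v : ℝ | ∃ y : Fin n1 → Fin n2 → ℝ,
    (∀ j l, y j l = 0 ∨ y j l = 1) ∧
    (∀ l, y i l = 0) ∧ (∀ j, y j k = 0) ∧
    (∀ j, ∑ l, y j l ≤ 1) ∧
    (∀ l, ∑ j, y j l ≤ 1) ∧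
    v = (∑ j, ∑ l, if i < j ∧ l ≠ k then (w i k j l + lam i k j l) * y j l else 0)
      + (∑ j, ∑ l, if j < i ∧ l ≠ k then (w i k j l - lam j l i k) * y j l else 0)}


/-! For a fixed matching `x`, the objective splits into one term per pair `(i, k)`, and the
slice `y i k` enters only the constraints attached to `(i, k)`, whose right-hand side is `x i k`.
The `(i, k)` term reads the slice only off row `i` and column `k`; erasing that row and column
leaves a feasible point of the subproblem defining `v_{ik}` which is identically zero when
`x i k = 0`. So each term is at most `v_{ik} * x i k`, and placing an optimal local matching
in every selected slice attains the bound. -/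

lemma nonneg_of_eq_zero_or_eq_one {a : ℝ} (h : a = 0 ∨ a = 1) : 0 ≤ a := by
  rcases h with rfl | rfl <;> norm_num

lemma le_of_eq_zero_or_eq_one {a : ℝ} (h : a = 0 ∨ a = 1) : a ≤ 1 := by
  rcases h with rfl | rfl <;> norm_num

lemma mul_eq_self_of_eq_zero_or_eq_one {t a : ℝ} (ht : t = 0 ∨ t = 1) (ha₀ : 0 ≤ a)
    (hat : a ≤ t) : t * a = a := by
  rcases ht with rfl | rfl
  · linarith
  · exact one_mul a

lemma finite_setOf_binary {α β : Type*} [Finite α] [Finite β] :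
    {x : α → β → ℝ | ∀ a b, x a b = 0 ∨ x a b = 1}.Finite :=
  Set.Finite.pi' fun _ => Set.Finite.pi' fun _ => Set.toFinite {0, 1}

section EraseRowCol

variable {α β : Type*} [DecidableEq α] [DecidableEq β]

def eraseRowCol (i : α) (k : β) (y : α → β → ℝ) : α → β → ℝ :=
  fun j l => if j = i ∨ l = k then 0 else y j l

lemma eraseRowCol_apply_of_ne {i j : α} {k l : β} (y : α → β → ℝ) (hj : j ≠ i) (hl : l ≠ k) :
    eraseRowCol i k y j l = y j l := by
  simp [eraseRowCol, hj, hl]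

lemma eraseRowCol_binary {i : α} {k : β} {y : α → β → ℝ} (hy : ∀ j l, y j l = 0 ∨ y j l = 1)
    (j : α) (l : β) : eraseRowCol i k y j l = 0 ∨ eraseRowCol i k y j l = 1 := by
  unfold eraseRowCol
  split_ifs
  exacts [Or.inl rfl, hy j l]

lemma eraseRowCol_le {i : α} {k : β} {y : α → β → ℝ} (hy : ∀ j l, 0 ≤ y j l) (j : α) (l : β) :
    eraseRowCol i k y j l ≤ y j l := by
  unfold eraseRowCol
  split_ifs
  exacts [hy j l, le_rfl]

lemma sum_eraseRowCol_row_le [Fintype β] {i : α} {k : β} {y : α → β → ℝ}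
    (hy : ∀ j l, 0 ≤ y j l) (j : α) : ∑ l, eraseRowCol i k y j l ≤ ∑ l ∈ univ.erase k, y j l := by
  rw [← Finset.sum_erase (a := k) _ (by simp [eraseRowCol])]
  exact Finset.sum_le_sum fun l _ => eraseRowCol_le hy j l

lemma sum_eraseRowCol_col_le [Fintype α] {i : α} {k : β} {y : α → β → ℝ}
    (hy : ∀ j l, 0 ≤ y j l) (l : β) : ∑ j, eraseRowCol i k y j l ≤ ∑ j ∈ univ.erase i, y j l := by
  rw [← Finset.sum_erase (a := i) _ (by simp [eraseRowCol])]
  exact Finset.sum_le_sum fun j _ => eraseRowCol_le hy j l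

end EraseRowCol

section LocalProblem

variable {n1 n2 : ℕ} (w lam : Fin n1 → Fin n2 → Fin n1 → Fin n2 → ℝ) (i : Fin n1) (k : Fin n2)

def localObj (y : Fin n1 → Fin n2 → ℝ) : ℝ :=
  (∑ j, ∑ l, if i < j ∧ l ≠ k then (w i k j l + lam i k j l) * y j l else 0)
    + (∑ j, ∑ l, if j < i ∧ l ≠ k then (w i k j l - lam j l i k) * y j l else 0)

def IsLocalMatching (y : Fin n1 → Fin n2 → ℝ) : Prop :=
  (∀ j l, y j l = 0 ∨ y j l = 1) ∧
    (∀ l, y i l = 0) ∧ (∀ j, y j k = 0) ∧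
    (∀ j, ∑ l, y j l ≤ 1) ∧
    (∀ l, ∑ j, y j l ≤ 1)

lemma vik_eq_sSup_image :
    vik n1 n2 w lam i k = sSup (localObj w lam i k '' {y | IsLocalMatching i k y}) := by
  unfold vik
  congr 1
  ext v
  exact ⟨fun ⟨y, h1, h2, h3, h4, h5, hv⟩ => ⟨y, ⟨h1, h2, h3, h4, h5⟩, hv.symm⟩,
    fun ⟨y, ⟨h1, h2, h3, h4, h5⟩, hv⟩ => ⟨y, h1, h2, h3, h4, h5, hv.symm⟩⟩

lemma localObj_smul (t : ℝ) (y : Fin n1 → Fin n2 → ℝ) :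
    localObj w lam i k (t • y) = t * localObj w lam i k y := by
  simp only [localObj, Pi.smul_apply, smul_eq_mul, mul_add, Finset.mul_sum, mul_ite, mul_zero,
    mul_left_comm t]

lemma localObj_eraseRowCol (y : Fin n1 → Fin n2 → ℝ) :
    localObj w lam i k (eraseRowCol i k y) = localObj w lam i k y := by
  unfold localObj
  congr 1 <;> refine Finset.sum_congr rfl fun j _ => Finset.sum_congr rfl fun l _ => ?_ <;>
    split_ifs with h
  · rw [eraseRowCol_apply_of_ne y h.1.ne' h.2]
  · rfl
  · rw [eraseRowCol_apply_of_ne y h.1.ne h.2]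
  · rfl

lemma isGreatest_vik :
    IsGreatest (localObj w lam i k '' {y | IsLocalMatching i k y}) (vik n1 n2 w lam i k) := by
  have hzero : IsLocalMatching i k 0 := by simp [IsLocalMatching]
  have hfin : {y | IsLocalMatching i k y}.Finite :=
    finite_setOf_binary.subset fun y hy => hy.1
  rw [vik_eq_sSup_image]
  exact ⟨Set.Nonempty.csSup_mem (Set.Nonempty.image _ ⟨0, hzero⟩) (hfin.image _),
    fun _ hv => le_csSup (hfin.image _).bddAbove hv⟩

end LocalProblem

lemma lagObj_eq_sum_localObj {n1 n2 : ℕ} (c : Fin n1 → Fin n2 → ℝ)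
    (w lam : Fin n1 → Fin n2 → Fin n1 → Fin n2 → ℝ) (x : Fin n1 → Fin n2 → ℝ)
    (y : Fin n1 → Fin n2 → Fin n1 → Fin n2 → ℝ) :
    lagObj n1 n2 c w lam x y =
      ∑ i, ∑ k, c i k * x i k + ∑ i, ∑ k, localObj w lam i k (y i k) := by
  simp only [lagObj, localObj, Finset.sum_add_distrib, add_assoc, ne_comm (a := (_ : Fin n2))]
  congr 2 <;> exact Finset.sum_congr rfl fun i _ => Finset.sum_comm

section Slices

variable {n1 n2 : ℕ} {x : Fin n1 → Fin n2 → ℝ} {y : Fin n1 → Fin n2 → Fin n1 → Fin n2 → ℝ}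

lemma sum_eraseRowCol_slice_row_le (hF : Feas n1 n2 x y) (i : Fin n1) (k : Fin n2)
    (j : Fin n1) : ∑ l, eraseRowCol i k (y i k) j l ≤ x i k := by
  obtain ⟨hx, hy, -, -, hrow, -⟩ := hF
  rcases eq_or_ne j i with rfl | hj
  · simpa [eraseRowCol] using nonneg_of_eq_zero_or_eq_one (hx j k)
  · exact (sum_eraseRowCol_row_le (fun j l => nonneg_of_eq_zero_or_eq_one (hy i k j l)) j).trans
      (hrow i j k hj.symm)

lemma sum_eraseRowCol_slice_col_le (hF : Feas n1 n2 x y) (i : Fin n1) (k : Fin n2)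
    (l : Fin n2) : ∑ j, eraseRowCol i k (y i k) j l ≤ x i k := by
  obtain ⟨hx, hy, -, -, -, hcol⟩ := hF
  rcases eq_or_ne l k with rfl | hl
  · simpa [eraseRowCol] using nonneg_of_eq_zero_or_eq_one (hx i l)
  · exact (sum_eraseRowCol_col_le (fun j l => nonneg_of_eq_zero_or_eq_one (hy i k j l)) l).trans
      (hcol i k l hl.symm)

lemma isLocalMatching_eraseRowCol_slice (hF : Feas n1 n2 x y) (i : Fin n1) (k : Fin n2) :
    IsLocalMatching i k (eraseRowCol i k (y i k)) :=
  have hxk : x i k ≤ 1 := le_of_eq_zero_or_eq_one (hF.1 i k)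
  ⟨eraseRowCol_binary (hF.2.1 i k), fun _ => by simp [eraseRowCol], fun _ => by simp [eraseRowCol],
    fun j => (sum_eraseRowCol_slice_row_le hF i k j).trans hxk,
    fun l => (sum_eraseRowCol_slice_col_le hF i k l).trans hxk⟩

lemma smul_eraseRowCol_slice (hF : Feas n1 n2 x y) (i : Fin n1) (k : Fin n2) :
    x i k • eraseRowCol i k (y i k) = eraseRowCol i k (y i k) := by
  have he := isLocalMatching_eraseRowCol_slice hF i k
  funext j l
  refine mul_eq_self_of_eq_zero_or_eq_one (hF.1 i k) (nonneg_of_eq_zero_or_eq_one (he.1 j l)) ?_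
  exact (Finset.single_le_sum (fun l _ => nonneg_of_eq_zero_or_eq_one (he.1 j l))
    (Finset.mem_univ l)).trans (sum_eraseRowCol_slice_row_le hF i k j)

lemma localObj_slice_le (w lam : Fin n1 → Fin n2 → Fin n1 → Fin n2 → ℝ) (hF : Feas n1 n2 x y)
    (i : Fin n1) (k : Fin n2) : localObj w lam i k (y i k) ≤ vik n1 n2 w lam i k * x i k := by
  set e := eraseRowCol i k (y i k)
  calc localObj w lam i k (y i k) = localObj w lam i k (x i k • e) := by
        rw [smul_eraseRowCol_slice hF, localObj_eraseRowCol]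
    _ = x i k * localObj w lam i k e := localObj_smul w lam i k _ e
    _ ≤ x i k * vik n1 n2 w lam i k :=
        mul_le_mul_of_nonneg_left
          ((isGreatest_vik w lam i k).2 ⟨e, isLocalMatching_eraseRowCol_slice hF i k, rfl⟩)
          (nonneg_of_eq_zero_or_eq_one (hF.1 i k))
    _ = vik n1 n2 w lam i k * x i k := mul_comm _ _

end Slices

section Lift

variable {n1 n2 : ℕ} {x : Fin n1 → Fin n2 → ℝ}

lemma sum_erase_le_one {ι : Type*} [Fintype ι] [DecidableEq ι] {f : ι → ℝ}
    (hf : ∀ a, f a = 0 ∨ f a = 1) (hsum : ∑ a, f a ≤ 1) (b : ι) : ∑ a ∈ univ.erase b, f a ≤ 1 :=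
  (Finset.sum_le_sum_of_subset_of_nonneg (Finset.subset_univ _)
    fun a _ _ => nonneg_of_eq_zero_or_eq_one (hf a)).trans hsum

lemma feas_smul_slices (hx : ∀ i k, x i k = 0 ∨ x i k = 1) (hrow : ∀ j, ∑ l, x j l ≤ 1)
    (hcol : ∀ l, ∑ j, x j l ≤ 1) {Y : Fin n1 → Fin n2 → Fin n1 → Fin n2 → ℝ}
    (hY : ∀ i k, IsLocalMatching i k (Y i k)) : Feas n1 n2 x (fun i k => x i k • Y i k) := by
  refine ⟨hx, fun i k j l => ?_, hrow, hcol, fun i j k _ => ?_, fun i k l _ => ?_⟩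
  · rcases hx i k with h | h <;> simp [h, (hY i k).1 j l]
  · simp only [Pi.smul_apply, smul_eq_mul, ← Finset.mul_sum]
    exact mul_le_of_le_one_right (nonneg_of_eq_zero_or_eq_one (hx i k))
      (sum_erase_le_one ((hY i k).1 j) ((hY i k).2.2.2.1 j) k)
  · simp only [Pi.smul_apply, smul_eq_mul, ← Finset.mul_sum]
    exact mul_le_of_le_one_right (nonneg_of_eq_zero_or_eq_one (hx i k))
      (sum_erase_le_one (fun j => (hY i k).1 j l) ((hY i k).2.2.2.2 l) i)

end Lift

lemma lagObj_le_of_feas {n1 n2 : ℕ} (c : Fin n1 → Fin n2 → ℝ)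
    (w lam : Fin n1 → Fin n2 → Fin n1 → Fin n2 → ℝ) {x : Fin n1 → Fin n2 → ℝ}
    {y : Fin n1 → Fin n2 → Fin n1 → Fin n2 → ℝ} (hF : Feas n1 n2 x y) :
    lagObj n1 n2 c w lam x y ≤ ∑ i, ∑ k, (c i k + vik n1 n2 w lam i k) * x i k := by
  rw [lagObj_eq_sum_localObj]
  simp only [add_mul, Finset.sum_add_distrib]
  gcongr with i _ k _
  exact localObj_slice_le w lam hF i k

lemma exists_feas_lagObj_eq {n1 n2 : ℕ} (c : Fin n1 → Fin n2 → ℝ)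
    (w lam : Fin n1 → Fin n2 → Fin n1 → Fin n2 → ℝ) {x : Fin n1 → Fin n2 → ℝ}
    (hx : ∀ i k, x i k = 0 ∨ x i k = 1) (hrow : ∀ j, ∑ l, x j l ≤ 1) (hcol : ∀ l, ∑ j, x j l ≤ 1) :
    ∃ y, Feas n1 n2 x y ∧
      lagObj n1 n2 c w lam x y = ∑ i, ∑ k, (c i k + vik n1 n2 w lam i k) * x i k := by
  choose Y hY hYopt using fun i k => (isGreatest_vik w lam i k).1
  refine ⟨_, feas_smul_slices hx hrow hcol hY, ?_⟩
  simp only [lagObj_eq_sum_localObj, localObj_smul, hYopt, add_mul, Finset.sum_add_distrib,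
    mul_comm (x _ _)]

/-- The Lagrangian subproblem decomposes: `Z_LD(λ)` is the optimal value of a
maximum-weight bipartite matching between `V1` and `V2` in which matching `i` to
`k` has weight `c i k + v_{ik}(λ)`. -/
theorem ZLD_decomposition (n1 n2 : ℕ) (c : Fin n1 → Fin n2 → ℝ)
    (w lam : Fin n1 → Fin n2 → Fin n1 → Fin n2 → ℝ) :
    ZLD n1 n2 c w lam =
      sSup {v : ℝ | ∃ x : Fin n1 → Fin n2 → ℝ,
        (∀ i k, x i k = 0 ∨ x i k = 1) ∧
        (∀ j, ∑ l, x j l ≤ 1) ∧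
        (∀ l, ∑ j, x j l ≤ 1) ∧
        v = ∑ i, ∑ k, (c i k + vik n1 n2 w lam i k) * x i k} := by
  refine csSup_eq_csSup_of_forall_exists_le ?_ ?_
  · rintro _ ⟨x, y, hF, rfl⟩
    exact ⟨_, ⟨x, hF.1, hF.2.2.1, hF.2.2.2.1, rfl⟩, lagObj_le_of_feas c w lam hF⟩
  · rintro _ ⟨x, hx, hrow, hcol, rfl⟩
    obtain ⟨y, hF, hy⟩ := exists_feas_lagObj_eq c w lam hx hrow hcol
    exact ⟨_, ⟨x, y, hF, rfl⟩, hy.ge⟩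
end

section
/- If a : V(K_k) ⇀ V(G) is a partial injective function with edge-correctness score s(a) = k(k−1)/2 (all edges of the complete graph K_k conserved), then a is total and its image is a clique of size k in G. -/
/-!
Since `K_k` has exactly `k(k-1)/2` edges, a full score means every pair `i < j` of vertices is
conserved: both endpoints are mapped and their images are adjacent. As `k ≥ 2`, every vertex lies
on some pair, so the alignment is total; by injectivity its image has `k` elements, pairwise adjacent.
-/

lemma Nat.card_subtype_fst_lt_snd (α : Type*) [Fintype α] [LinearOrder α] :
    Nat.card {p : α × α // p.1 < p.2} = (Nat.card α).choose 2 := by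
  classical
  rw [Nat.card_eq_fintype_card, Fintype.card_subtype, Fintype.card_product_filter_lt,
    Nat.card_eq_fintype_card]

lemma forall_of_card_subtype_and_eq {α : Type*} [Finite α] {P Q : α → Prop}
    (h : Nat.card {x // P x ∧ Q x} = Nat.card {x // P x}) (x : α) (hx : P x) : Q x := by
  have hsub : {x | P x ∧ Q x} ⊆ {x | P x} := fun _ hx => hx.1
  have heq := Set.eq_of_subset_of_ncard_le hsub (by
    rw [← Nat.card_coe_set_eq, ← Nat.card_coe_set_eq]; exact h.ge)
  have hx' : x ∈ {x | P x ∧ Q x} := heq ▸ hx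
  exact hx'.2

namespace SimpleGraph

variable {ι V : Type*} (G : SimpleGraph V) (a : ι → Option V)

def EdgeConserved (i j : ι) : Prop :=
  ∃ v w, a i = some v ∧ a j = some w ∧ G.Adj v w

variable {G a}

lemma EdgeConserved.symm {i j : ι} (h : G.EdgeConserved a i j) : G.EdgeConserved a j i :=
  let ⟨v, w, hv, hw, hvw⟩ := h
  ⟨w, v, hw, hv, hvw.symm⟩

lemma EdgeConserved.isSome_left {i j : ι} (h : G.EdgeConserved a i j) : (a i).isSome := by
  obtain ⟨v, -, hv, -⟩ := h
  simp [hv]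

lemma isClique_of_edgeConserved (h : Pairwise (G.EdgeConserved a)) :
    G.IsClique {v | ∃ i, a i = some v} := by
  rintro v ⟨i, hi⟩ w ⟨j, hj⟩ hvw
  have hij : i ≠ j := by rintro rfl; exact hvw (Option.some.inj (hi.symm.trans hj))
  obtain ⟨v', w', hv', hw', hadj⟩ := h hij
  rw [hi, Option.some.injEq] at hv'
  rw [hj, Option.some.injEq] at hw'
  exact hv' ▸ hw' ▸ hadj

end SimpleGraph

lemma ncard_setOf_eq_some_of_isSome {ι V : Type*} [Finite ι] {a : ι → Option V}
    (hinj : ∀ i j v, a i = some v → a j = some v → i = j) (htot : ∀ i, (a i).isSome) :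
    {v | ∃ i, a i = some v}.ncard = Nat.card ι := by
  set f : ι → V := fun i => (a i).get (htot i)
  have hrange : {v | ∃ i, a i = some v} = Set.range f := by
    ext v
    constructor
    · rintro ⟨i, hi⟩
      exact ⟨i, Option.get_of_eq_some _ hi⟩
    · rintro ⟨i, rfl⟩
      exact ⟨i, (Option.some_get _).symm⟩
  have hf : Function.Injective f := fun i j hij =>
    hinj i j (f i) (Option.some_get _).symm (by rw [hij]; exact (Option.some_get _).symm)
  rw [hrange, ← Set.image_univ, Set.ncard_image_of_injective _ hf, Set.ncard_univ]

/-- If an alignment of the complete graph `K_k` with `G` conserves all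
`k(k-1)/2` edges, then it is total and its image is a clique of size `k` in `G`. -/
theorem full_score_gives_clique {V : Type*} (G : SimpleGraph V)
    (k : ℕ) (hk : 2 ≤ k)
    (a : Fin k → Option V)
    (hinj : ∀ i j v, a i = some v → a j = some v → i = j)
    (hscore : Nat.card {p : Fin k × Fin k //
        p.1 < p.2 ∧ ∃ v w, a p.1 = some v ∧ a p.2 = some w ∧ G.Adj v w}
      = k * (k - 1) / 2) :
    (∀ i, (a i).isSome) ∧
    G.IsClique {v | ∃ i, a i = some v} ∧
    {v | ∃ i, a i = some v}.ncard = k := by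
  have hlt : ∀ i j, i < j → G.EdgeConserved a i j := fun i j hij =>
    forall_of_card_subtype_and_eq (P := fun p : Fin k × Fin k => p.1 < p.2)
      (by rw [hscore, Nat.card_subtype_fst_lt_snd, Nat.card_fin, Nat.choose_two_right])
      (i, j) hij
  have hne : Pairwise (G.EdgeConserved a) := fun i j hij =>
    hij.lt_or_gt.elim (hlt i j) fun hji => (hlt j i hji).symm
  have htot : ∀ i, (a i).isSome := fun i => by
    have : Nontrivial (Fin k) := Fin.nontrivial_iff_two_le.mpr hk
    obtain ⟨j, hj⟩ := exists_ne i
    exact (hne hj.symm).isSome_left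
  refine ⟨htot, SimpleGraph.isClique_of_edgeConserved hne, ?_⟩
  rw [ncard_setOf_eq_some_of_isSome hinj htot, Nat.card_fin]
end
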